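/- arXiv:1112.0800 — 2 statements merged into one kernel-verified Lean document; each statement's English description precedes it below -/
import Mathlib

section
/- Let G be a graph containing a triangle u,v,w, where u has degree 3 in G. Then every embedding of G - vw into a surface can be extended to an embedding of G into the same surface. In particular, the genus of G equals the genus of G - vw. -/
open SimpleGraph

namespace AltPaper

variable {V : Type*} {W : Type*} {U : Type*}

/-- The dart-reversal permutation of a graph. -/
def dartRev (G : SimpleGraph V) : Equiv.Perm G.Dart :=
  Function.Involutive.toPerm SimpleGraph.Dart.symm SimpleGraph.Dart.symm_involutive

/-- A combinatorial embedding of `G` into an orientable surface, given by a rotation system: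
a permutation of the darts whose orbits are exactly the stars of the vertices. -/
structure RotSys (G : SimpleGraph V) where
  rot : Equiv.Perm G.Dart
  fst_rot : ∀ d : G.Dart, (rot d).fst = d.fst
  orbit_full : ∀ d d' : G.Dart, d.fst = d'.fst → ∃ n : ℕ, (rot ^ n) d = d'

namespace RotSys

variable {G : SimpleGraph V}

/-- The face-tracing permutation of the rotation system. -/
def facePerm (R : RotSys G) : Equiv.Perm G.Dart := (dartRev G).trans R.rot

/-- The number of faces of the embedding: the number of orbits of the face permutation. -/
noncomputable def numFaces (R : RotSys G) : ℕ :=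
  Nat.card (MulAction.orbitRel.Quotient (Subgroup.zpowers R.facePerm) G.Dart)

/-- The number of non-isolated vertices: orbits of the rotation. -/
noncomputable def numVerts (R : RotSys G) : ℕ :=
  Nat.card (MulAction.orbitRel.Quotient (Subgroup.zpowers R.rot) G.Dart)

/-- The number of connected components containing at least one edge. -/
noncomputable def numComps (R : RotSys G) : ℕ :=
  Nat.card (MulAction.orbitRel.Quotient (Subgroup.closure {R.rot, dartRev G}) G.Dart)

/-- By Euler's formula, the (total, orientable) genus of the embedding `R` is at most `k`.
Isolated vertices are irrelevant for the genus and are ignored. -/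
noncomputable def genusLE (R : RotSys G) (k : ℕ) : Prop :=
  2 * R.numComps + Nat.card G.edgeSet ≤ 2 * k + R.numFaces + R.numVerts

/-- Vertices `v₁ v₂ v₃ v₄` appear (in this cyclic order) on a common face of `R`. -/
def cyclicOrderedFace (R : RotSys G) (v₁ v₂ v₃ v₄ : V) : Prop :=
  ∃ (d : G.Dart) (a b c : ℕ), 0 < a ∧ a < b ∧ b < c ∧
    c < Function.minimalPeriod (⇑R.facePerm) d ∧
    d.fst = v₁ ∧ ((R.facePerm ^ a) d).fst = v₂ ∧ ((R.facePerm ^ b) d).fst = v₃ ∧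
    ((R.facePerm ^ c) d).fst = v₄

/-- There is a face of `R` in which `x` and `y` appear (at least) twice, in the alternating
cyclic order `x, y, x, y`. -/
def altFace (R : RotSys G) (x y : V) : Prop := R.cyclicOrderedFace x y x y

/-- `u` and `v` lie on a common face of `R`. -/
def Cofacial (R : RotSys G) (u v : V) : Prop :=
  ∃ (d : G.Dart) (n : ℕ), d.fst = u ∧ ((R.facePerm ^ n) d).fst = v

/-- All vertices of `s` lie on a common face of `R`. -/
def CofacialSet (R : RotSys G) (s : Set V) : Prop :=
  ∃ d : G.Dart, ∀ v ∈ s, ∃ n : ℕ, ((R.facePerm ^ n) d).fst = v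

end RotSys

/-- `G` embeds in the orientable surface of genus `k`. -/
def GenusLE (G : SimpleGraph V) (k : ℕ) : Prop := ∃ R : RotSys G, R.genusLE k

/-- `G` has an embedding in the orientable surface of genus `k` with a face in which the
vertices `x` and `y` appear twice, in alternating cyclic order. -/
def AltEmb (G : SimpleGraph V) (x y : V) (k : ℕ) : Prop :=
  ∃ R : RotSys G, R.genusLE k ∧ R.altFace x y

end AltPaper
namespace AltPaper

variable {V : Type*} {W : Type*} {U : Type*}

/-- A combinatorial embedding of `G` into a (possibly non-orientable) surface:
a rotation system together with a signature on the edges. -/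
structure SRS (G : SimpleGraph V) where
  rot : Equiv.Perm G.Dart
  fst_rot : ∀ d : G.Dart, (rot d).fst = d.fst
  orbit_full : ∀ d d' : G.Dart, d.fst = d'.fst → ∃ n : ℕ, (rot ^ n) d = d'
  sign : Sym2 V → Bool

namespace SRS

variable {G : SimpleGraph V}

/-- Auxiliary involution used in signed face tracing: reverse the dart and update the side. -/
def flip (S : SRS G) : Equiv.Perm (G.Dart × Bool) :=
  Function.Involutive.toPerm (fun p => (p.1.symm, xor p.2 (S.sign p.1.edge)))
    (by
      rintro ⟨d, s⟩
      have h1 : d.symm.symm = d := SimpleGraph.Dart.symm_involutive d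
      have h2 : d.symm.edge = d.edge := SimpleGraph.Dart.edge_symm d
      simp [h1, h2, Bool.xor_assoc])

/-- Auxiliary permutation used in signed face tracing: apply the rotation forwards or
backwards according to the current side. -/
def rotPm (S : SRS G) : Equiv.Perm (G.Dart × Bool) where
  toFun p := (cond p.2 (S.rot p.1) (S.rot.symm p.1), p.2)
  invFun p := (cond p.2 (S.rot.symm p.1) (S.rot p.1), p.2)
  left_inv := by rintro ⟨d, (_ | _)⟩ <;> simp
  right_inv := by rintro ⟨d, (_ | _)⟩ <;> simp

/-- The signed face-tracing permutation, acting on sided darts. -/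
def facePerm (S : SRS G) : Equiv.Perm (G.Dart × Bool) := (S.flip).trans (S.rotPm)

/-- Twice the number of faces (each face is traced once on each side). -/
noncomputable def numFaces2 (S : SRS G) : ℕ :=
  Nat.card (MulAction.orbitRel.Quotient (Subgroup.zpowers S.facePerm) (G.Dart × Bool))

noncomputable def numVerts (S : SRS G) : ℕ :=
  Nat.card (MulAction.orbitRel.Quotient (Subgroup.zpowers S.rot) G.Dart)

noncomputable def numComps (S : SRS G) : ℕ :=
  Nat.card (MulAction.orbitRel.Quotient (Subgroup.closure {S.rot, dartRev G}) G.Dart)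

/-- Twice the (total) Euler genus of the embedding, via Euler's formula. -/
noncomputable def eulerGenus2 (S : SRS G) : ℤ :=
  4 * S.numComps - 2 * S.numVerts + 2 * Nat.card G.edgeSet - S.numFaces2

/-- The Euler genus of the embedding is at most `h`. -/
noncomputable def eulerGenusLE (S : SRS G) (h : ℕ) : Prop := S.eulerGenus2 ≤ 2 * h

/-- The sided darts `p` and `q` lie on the same face. -/
def SameFace (S : SRS G) (p q : G.Dart × Bool) : Prop := ∃ n : ℤ, (S.facePerm ^ n) p = q

/-- The set of darts of the facial walk of the face of `p`. -/
def faceDarts (S : SRS G) (p : G.Dart × Bool) : Set G.Dart :=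
  {d | ∃ q, S.SameFace p q ∧ q.1 = d}

/-- The vertex `v` appears on the facial walk of the face of `p`. -/
def vertexOnFace (S : SRS G) (p : G.Dart × Bool) (v : V) : Prop :=
  ∃ d ∈ S.faceDarts p, d.fst = v

/-- The facial walk of the face of `p` visits `x` and `y` in alternating cyclic order
`x, y, x, y`. -/
def altFaceS (S : SRS G) (p : G.Dart × Bool) (x y : V) : Prop :=
  ∃ (a b c : ℕ), 0 < a ∧ a < b ∧ b < c ∧
    c < Function.minimalPeriod (⇑S.facePerm) p ∧
    p.1.fst = x ∧ ((S.facePerm ^ a) p).1.fst = y ∧ ((S.facePerm ^ b) p).1.fst = x ∧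
    ((S.facePerm ^ c) p).1.fst = y

end SRS

/-- `G` embeds in the projective plane. -/
def ProjPlanar (G : SimpleGraph V) : Prop := ∃ S : SRS G, S.eulerGenusLE 1

end AltPaper
namespace AltPaper

variable {V : Type*} {W : Type*} {U : Type*}

/-! ### The multigraph obtained by identifying two vertices, and its planar embeddings -/

/-- The darts of the multigraph `Ĥ` obtained from `G` by identifying `x` and `y`
(deleting the edge `xy` first, if present). -/
def PD (G : SimpleGraph V) (x y : V) : Type _ := {d : G.Dart // d.edge ≠ s(x, y)}

/-- The source vertex of a dart of `Ĥ`: the identified vertex `v_{xy}` is represented by `x`. -/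
def psrc (G : SimpleGraph V) (x y : V) [DecidableEq V] (d : PD G x y) : V :=
  if d.val.fst = y then x else d.val.fst

/-- Dart reversal in `Ĥ`. -/
def prev (G : SimpleGraph V) (x y : V) : Equiv.Perm (PD G x y) :=
  Function.Involutive.toPerm
    (fun d => ⟨d.val.symm, by rw [SimpleGraph.Dart.edge_symm]; exact d.prop⟩)
    (by
      rintro ⟨d, hd⟩
      exact Subtype.ext (SimpleGraph.Dart.symm_involutive d))

/-- A combinatorial embedding (in an orientable surface) of the multigraph `Ĥ` obtained from
`G` by identifying `x` and `y` into the vertex `v_{xy}` (loops are discarded). -/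
structure PinchRS (G : SimpleGraph V) (x y : V) [DecidableEq V] where
  rot : Equiv.Perm (PD G x y)
  src_rot : ∀ d, psrc G x y (rot d) = psrc G x y d
  orbit_full : ∀ d d', psrc G x y d = psrc G x y d' → ∃ n : ℕ, (rot ^ n) d = d'

namespace PinchRS

variable [DecidableEq V] {G : SimpleGraph V} {x y : V}

def facePerm (P : PinchRS G x y) : Equiv.Perm (PD G x y) := (prev G x y).trans P.rot

noncomputable def numFaces (P : PinchRS G x y) : ℕ :=
  Nat.card (MulAction.orbitRel.Quotient (Subgroup.zpowers P.facePerm) (PD G x y))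

noncomputable def numVerts (P : PinchRS G x y) : ℕ :=
  Nat.card (MulAction.orbitRel.Quotient (Subgroup.zpowers P.rot) (PD G x y))

noncomputable def numComps (P : PinchRS G x y) : ℕ :=
  Nat.card (MulAction.orbitRel.Quotient (Subgroup.closure {P.rot, prev G x y}) (PD G x y))

/-- The embedding `P` of `Ĥ` is planar (Euler's formula; the dart count is twice the
edge count). -/
noncomputable def Planar (P : PinchRS G x y) : Prop :=
  4 * P.numComps + Nat.card (PD G x y) ≤ 2 * P.numFaces + 2 * P.numVerts

/-- The number of label transitions in the cyclic sequence of labels around the identified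
vertex `v_{xy}`: a dart incident with `v_{xy}` is labelled `X` when it comes from `x`. -/
noncomputable def pinchTrans (P : PinchRS G x y) : ℕ :=
  Nat.card {d : PD G x y // psrc G x y d = x ∧
    ¬ ((d.val.fst = x) ↔ ((P.rot d).val.fst = x))}

end PinchRS

/-! ### Splitting the two terminals -/

/-- The projection recording that `Sum.inr false` is the second copy of `x` and
`Sum.inr true` is the second copy of `y` (while `Sum.inl x`, `Sum.inl y` are the first
copies). -/
def splitProj (x y : V) : V ⊕ Bool → V
  | Sum.inl v => v
  | Sum.inr false => x
  | Sum.inr true => y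

/-- `G'` is obtained from `G` by splitting `x` into `x₁ = Sum.inl x`, `x₂ = Sum.inr false`
and `y` into `y₁ = Sum.inl y`, `y₂ = Sum.inr true`, distributing the incident edges. -/
def IsSplitAt (G : SimpleGraph V) (x y : V) (G' : SimpleGraph (V ⊕ Bool)) : Prop :=
  (∀ a b, G'.Adj a b → G.Adj (splitProj x y a) (splitProj x y b)) ∧
  (∀ u v, G.Adj u v → ∃ a b, G'.Adj a b ∧ splitProj x y a = u ∧ splitProj x y b = v) ∧
  (∀ a b a' b', G'.Adj a b → G'.Adj a' b' →
    splitProj x y a = splitProj x y a' → splitProj x y b = splitProj x y b' → a = a' ∧ b = b')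

/-- The simple graph `G/xy` obtained from `G` by identifying `x` and `y` (the edge `xy`,
if present, is deleted first, and multiple edges are merged); the merged vertex is `x`,
and `y` becomes isolated. -/
def pinch (G : SimpleGraph V) (x y : V) : SimpleGraph V :=
  SimpleGraph.fromRel (fun a b => a ≠ y ∧ b ≠ y ∧
    ∃ a' b', G.Adj a' b' ∧ (a' = a ∨ (a' = y ∧ a = x)) ∧ (b' = b ∨ (b' = y ∧ b = x)))

/-- The graph `G*`: the `xy`-sum of `G` with a copy of `K₅` minus an edge, the two ends of
the deleted edge being identified with `x` and `y`. -/
def Gstar (G : SimpleGraph V) (x y : V) : SimpleGraph (V ⊕ Fin 3) :=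
  SimpleGraph.fromRel (fun a b =>
    (∃ u v, a = Sum.inl u ∧ b = Sum.inl v ∧ G.Adj u v) ∨
    (∃ i j : Fin 3, a = Sum.inr i ∧ b = Sum.inr j) ∨
    (∃ i : Fin 3, a = Sum.inr i ∧ (b = Sum.inl x ∨ b = Sum.inl y)))

/-- The two-terminal graph corresponding to an `XY`-labelled graph `H`:
add the terminal `x = Sum.inr false` joined to all `X`-labelled vertices and the terminal
`y = Sum.inr true` joined to all `Y`-labelled vertices. -/
def termGraph (H : SimpleGraph W) (lX lY : W → Prop) : SimpleGraph (W ⊕ Bool) :=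
  SimpleGraph.fromRel (fun a b =>
    (∃ u v, a = Sum.inl u ∧ b = Sum.inl v ∧ H.Adj u v) ∨
    (∃ u, a = Sum.inr false ∧ b = Sum.inl u ∧ lX u) ∨
    (∃ u, a = Sum.inr true ∧ b = Sum.inl u ∧ lY u))

/-- Identification map used for `xy`-sums: `w₁ ↦ u₁`, `w₂ ↦ u₂`. -/
def sumRho [DecidableEq W] (u₁ u₂ : U) (w₁ w₂ : W) : W → U ⊕ W := fun w =>
  if w = w₁ then Sum.inl u₁ else if w = w₂ then Sum.inl u₂ else Sum.inr w

/-- The `xy`-sum of `H₁` (with terminals `u₁, u₂`) and `H₂` (with terminals `w₁, w₂`):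
their union after identifying `u₁` with `w₁` and `u₂` with `w₂`; the edge between the two
identified vertices is deleted even if present in a summand. -/
def xySum [DecidableEq W] (H₁ : SimpleGraph U) (u₁ u₂ : U)
    (H₂ : SimpleGraph W) (w₁ w₂ : W) : SimpleGraph (U ⊕ W) :=
  SimpleGraph.fromRel (fun p q => s(p, q) ≠ s(Sum.inl u₁, Sum.inl u₂) ∧
    ((∃ a b, p = Sum.inl a ∧ q = Sum.inl b ∧ H₁.Adj a b) ∨
     (∃ a b, H₂.Adj a b ∧ p = sumRho u₁ u₂ w₁ w₂ a ∧ q = sumRho u₁ u₂ w₁ w₂ b)))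

/-! ### Subdivisions -/

/-- A subdivision of `K` contained in `G`: branch vertices are given by the injection `f`,
branches are internally disjoint paths avoiding the branch vertices. -/
structure SubdivisionEmb (K : SimpleGraph U) (G : SimpleGraph V) where
  f : U → V
  inj : Function.Injective f
  walk : ∀ {a b : U}, K.Adj a b → G.Walk (f a) (f b)
  isPath : ∀ {a b : U} (h : K.Adj a b), (walk h).IsPath
  symmCompat : ∀ {a b : U} (h : K.Adj a b), walk h.symm = (walk h).reverse
  internal_disj : ∀ {a b c d : U} (h₁ : K.Adj a b) (h₂ : K.Adj c d), s(a, b) ≠ s(c, d) →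
    ∀ v, v ∈ (walk h₁).support → v ∈ (walk h₂).support →
      (v = f a ∨ v = f b) ∧ (v = f c ∨ v = f d)
  branch_only : ∀ {a b : U} (h : K.Adj a b) (u : U), f u ∈ (walk h).support → u = a ∨ u = b

/-- The set of vertices of the subdivision. -/
def SubSupport {K : SimpleGraph U} {G : SimpleGraph V} (s : SubdivisionEmb K G) : Set V :=
  {v | ∃ (a b : U) (h : K.Adj a b), v ∈ (s.walk h).support}

/-- The set of edges of the subdivision. -/
def SubEdges {K : SimpleGraph U} {G : SimpleGraph V} (s : SubdivisionEmb K G) : Set (Sym2 V) :=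
  {e | ∃ (a b : U) (h : K.Adj a b), e ∈ (s.walk h).edges}

/-! ### Blocks -/

/-- `B` is a block of `H`: a maximal connected vertex set without cutvertex. -/
def IsBlock (H : SimpleGraph W) (B : Set W) : Prop :=
  B.Nonempty ∧ (H.induce B).Preconnected ∧ (∀ v : W, (H.induce (B \ {v})).Preconnected) ∧
  ∀ B' : Set W, B ⊆ B' →
    ((H.induce B').Preconnected ∧ ∀ v : W, (H.induce (B' \ {v})).Preconnected) → B' = B

/-! ### Bridges of a cycle -/

/-- The `C`-bridge generated by a set `K` of vertices (the component) : `K` together with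
all edges leaving `K` and their endpoints. -/
def bridgeOf (G : SimpleGraph V) (K : Set V) : G.Subgraph where
  verts := K ∪ {v | ∃ u ∈ K, G.Adj u v}
  Adj a b := G.Adj a b ∧ (a ∈ K ∨ b ∈ K)
  adj_sub h := h.1
  edge_vert := by
    rintro a b ⟨h, ha | hb⟩
    · exact Or.inl ha
    · exact Or.inr ⟨b, hb, h.symm⟩
  symm := by
    constructor
    rintro a b ⟨h, hab⟩
    exact ⟨h.symm, hab.symm⟩

/-- `B` is a `C`-bridge in `G`, for a closed walk `C`: either a chord of `C`, or a connected
component of `G - V(C)` together with all edges joining it to `C`. -/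
def IsCBridge {r : V} (G : SimpleGraph V) (C : G.Walk r r) (B : G.Subgraph) : Prop :=
  (∃ (a b : V) (h : G.Adj a b), a ∈ C.support ∧ b ∈ C.support ∧ s(a, b) ∉ C.edges ∧
      B = G.subgraphOfAdj h) ∨
  (∃ c : (G.induce {v | v ∉ C.support}).ConnectedComponent,
      B = bridgeOf G (Subtype.val '' c.supp))

/-- The attachments of a `C`-bridge `B`. -/
def attachments {G : SimpleGraph V} {r : V} (C : G.Walk r r) (B : G.Subgraph) : Set V :=
  B.verts ∩ {v | v ∈ C.support}

/-- The vertex set of the segment `C[u,v]` of the closed walk `C` from `u` to `v` (in the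
orientation of `C`). -/
def segSet [DecidableEq V] {r : V} (G : SimpleGraph V) (C : G.Walk r r) (u v : V) : Set V :=
  {w | ∃ (hu : u ∈ C.support) (hv : v ∈ (C.rotate u hu).support),
    w ∈ ((C.rotate u hu).takeUntil v hv).support}

/-- Two `C`-bridges avoid each other. -/
def Avoid [DecidableEq V] {r : V} (G : SimpleGraph V) (C : G.Walk r r)
    (B₁ B₂ : G.Subgraph) : Prop :=
  ∃ u v, u ∈ C.support ∧ v ∈ C.support ∧
    attachments C B₁ ⊆ segSet G C u v ∧ attachments C B₂ ⊆ segSet G C v u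

/-- Two `C`-bridges overlap. -/
def Overlap [DecidableEq V] {r : V} (G : SimpleGraph V) (C : G.Walk r r)
    (B₁ B₂ : G.Subgraph) : Prop := ¬ Avoid G C B₁ B₂

/-! ### The classes `A^k_{xy}` and their obstructions -/

/-- Contraction of the edge `uv` of `G`: `v` is merged into `u` (and becomes isolated). -/
def contractEdge (G : SimpleGraph V) (u v : V) : SimpleGraph V :=
  SimpleGraph.fromRel (fun a b => a ≠ v ∧ b ≠ v ∧
    (G.Adj a b ∨ (a = u ∧ G.Adj v b) ∨ (b = u ∧ G.Adj a v)))

/-- The class `A^k_{xy}`: `G` embeds in the orientable surface of genus `k-1`, or `G` is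
`xy`-alternating on the orientable surface of genus `k`. -/
def Akxy (G : SimpleGraph V) (x y : V) (k : ℕ) : Prop :=
  GenusLE G (k - 1) ∨ AltEmb G x y k

/-- `G` (with terminals `x, y`) is an obstruction for the class `A^k_{xy}`: it is not in the
class, but every deletion and every allowed contraction (one which does not identify the two
terminals) is. -/
def MinimalNotAk (G : SimpleGraph V) (x y : V) (k : ℕ) : Prop :=
  ¬ Akxy G x y k ∧
  (∀ e ∈ G.edgeSet, Akxy (G.deleteEdges {e}) x y k) ∧
  (∀ u v, G.Adj u v → v ≠ x → v ≠ y → Akxy (contractEdge G u v) x y k)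

/-! ### Cyclic label sequences -/

/-- The number of transitions between consecutive entries of a list. -/
def listTrans (w : List Bool) : ℕ := ((w.zip w.tail).filter (fun p => p.1 ≠ p.2)).length

/-- The number of transitions of a list, viewed as a cyclic sequence. -/
def cycTrans : List Bool → ℕ
  | [] => 0
  | a :: t => listTrans ((a :: t) ++ [a])

/-- The cyclic sequence of labelled vertices (labels are subsets of `{X, Y}`, with
`true = X`, `false = Y`) contains six distinct vertices, in this cyclic order or its
reverse, whose labels contain `X, Y, X, Y, X, Y` respectively. -/
def HasXYXYXY (n : ℕ) (lab : ZMod (n + 1) → Finset Bool) : Prop :=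
  ∃ (s : ZMod (n + 1)) (a : Fin 6 → ℕ) (ε : Bool), StrictMono a ∧ a 5 ≤ n ∧
    ∀ k : Fin 6, (decide (k.val % 2 = 0)) ∈
      lab (s + (if ε then ((a k : ℕ) : ZMod (n + 1)) else -((a k : ℕ) : ZMod (n + 1))))

/-- `L` arranges the labels of each vertex of the cyclic sequence into a list (each label
used exactly once). -/
def IsArrangement (n : ℕ) (lab : ZMod (n + 1) → Finset Bool)
    (L : ZMod (n + 1) → List Bool) : Prop :=
  ∀ i, (L i).Nodup ∧ (L i).toFinset = lab i

/-- The cyclic label sequence obtained by concatenating the arranged labels in the cyclic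
order of the vertices. -/
def arranged (n : ℕ) (L : ZMod (n + 1) → List Bool) : List Bool :=
  (List.ofFn (fun j : Fin (n + 1) => L ((j : ℕ) : ZMod (n + 1)))).flatten

end AltPaper

/-!
A rotation system of `G` induces one of `G - vw` by letting each rotation skip the darts of `vw`.
Since `u` is adjacent to both `v` and `w`, this changes neither the vertices nor the components,
removes one edge, and multiplies the face permutation by a transposition, so at most one face is
lost and the genus does not grow. Conversely, since `u` has degree three, the darts `uv` and `uw`
are consecutive in the rotation at `u` of any embedding of `G - vw`, so some face passes
`v, u, w`; inserting `vw` into that face splits it in two, and again the genus does not grow.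
-/

open Equiv Function

namespace Setoid

variable {α β : Type*}

theorem card_quotient_comap_eq {f : β → α} {r : Setoid α} (hf : ∀ a, ∃ b, r a (f b)) :
    Nat.card (Quotient (r.comap f)) = Nat.card (Quotient r) := by
  refine Nat.card_eq_of_bijective (Quotient.map' f fun _ _ => id) ⟨?_, ?_⟩
  · intro x y
    refine Quotient.inductionOn₂ x y fun a b h => ?_
    exact Quotient.sound (s := r.comap f) (Quotient.exact (s := r) h)
  · rintro ⟨a⟩
    obtain ⟨b, hb⟩ := hf a
    exact ⟨Quotient.mk _ b, (Quotient.sound hb).symm⟩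

theorem card_quotient_le_of_le [Finite α] {S T : Setoid α} (h : S ≤ T) :
    Nat.card (Quotient T) ≤ Nat.card (Quotient S) :=
  Nat.card_le_card_of_surjective (Quotient.map' id h) <| by
    rintro ⟨a⟩
    exact ⟨Quotient.mk _ a, rfl⟩

def mergeClasses (S : Setoid α) (p q : α) : Setoid α where
  r a b := S a b ∨ (S a p ∨ S a q) ∧ (S b p ∨ S b q)
  iseqv := by
    refine ⟨fun a => .inl (S.refl a), ?_, ?_⟩
    · rintro a b (h | ⟨ha, hb⟩)
      exacts [.inl (S.symm h), .inr ⟨hb, ha⟩]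
    · rintro a b c (hab | ⟨ha, hb⟩) (hbc | ⟨hb', hc⟩)
      · exact .inl (S.trans hab hbc)
      · exact .inr ⟨hb'.imp (S.trans hab) (S.trans hab), hc⟩
      · exact .inr ⟨ha, hb.imp (S.trans (S.symm hbc)) (S.trans (S.symm hbc))⟩
      · exact .inr ⟨ha, hc⟩

theorem le_mergeClasses (S : Setoid α) (p q : α) : S ≤ S.mergeClasses p q :=
  fun _ _ => .inl

theorem mergeClasses_eq_self {S : Setoid α} {p q : α} (h : S p q) : S.mergeClasses p q = S := by
  refine le_antisymm ?_ (le_mergeClasses S p q)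
  rintro a b (hab | ⟨ha, hb⟩)
  · exact hab
  · have hap : S a p := ha.elim id fun haq => S.trans haq (S.symm h)
    have hbp : S b p := hb.elim id fun hbq => S.trans hbq (S.symm h)
    exact S.trans hap (S.symm hbp)

theorem card_quotient_le_card_mergeClasses_add_one [Finite α] (S : Setoid α) (p q : α) :
    Nat.card (Quotient S) ≤ Nat.card (Quotient (S.mergeClasses p q)) + 1 := by
  classical
  let F : Quotient S → Option (Quotient (S.mergeClasses p q)) :=
    Quotient.lift (fun a => if S a q then none else some (Quotient.mk _ a)) fun a b hab => by
      by_cases ha : S a q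
      · simp [ha, S.trans (S.symm hab) ha]
      · have hb : ¬ S b q := fun hb => ha (S.trans hab hb)
        simp only [ha, hb, if_false, Option.some.injEq]
        exact Quotient.sound (.inl hab)
  have hF : Injective F := by
    intro x y
    refine Quotient.inductionOn₂ x y fun a b h => ?_
    by_cases ha : S a q <;> by_cases hb : S b q <;>
      simp only [F, Quotient.lift_mk, ha, hb, if_true, if_false, reduceCtorEq,
        Option.some.injEq] at h ⊢
    · exact Quotient.sound (S.trans ha (S.symm hb))
    · refine Quotient.sound ?_
      rcases Quotient.exact h with hab | ⟨ha' | ha', hb' | hb'⟩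
      exacts [hab, S.trans ha' (S.symm hb'), (hb hb').elim, (ha ha').elim, (ha ha').elim]
  calc Nat.card (Quotient S) ≤ Nat.card (Option (Quotient (S.mergeClasses p q))) :=
        Nat.card_le_card_of_injective F hF
    _ = _ := Finite.card_option

end Setoid

namespace Equiv.Perm

variable {α : Type*}

/-- The number of orbits of `f`; fixed points count as orbits. -/
noncomputable def orbitCount (f : Perm α) : ℕ := Nat.card (Quotient (SameCycle.setoid f))

theorem orbitRel_zpowers (f : Perm α) :
    MulAction.orbitRel (Subgroup.zpowers f) α = SameCycle.setoid f := by
  ext a b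
  rw [MulAction.orbitRel_apply, MulAction.mem_orbit_iff]
  constructor
  · rintro ⟨⟨g, hg⟩, rfl⟩
    obtain ⟨k, rfl⟩ := Subgroup.mem_zpowers_iff.1 hg
    exact ⟨-k, by simp [Subgroup.smul_def]⟩
  · rintro ⟨k, rfl⟩
    exact ⟨⟨f ^ (-k), Subgroup.zpow_mem_zpowers f _⟩, by simp [Subgroup.smul_def]⟩

theorem card_orbitRel_zpowers (f : Perm α) :
    Nat.card (MulAction.orbitRel.Quotient (Subgroup.zpowers f) α) = f.orbitCount := by
  rw [orbitCount, ← orbitRel_zpowers]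

section Swap

variable [Finite α]

theorem sameCycle_setoid_le {f : Perm α} {S : Setoid α} (h : ∀ a, S a (f a)) :
    SameCycle.setoid f ≤ S := by
  intro a b hab
  obtain ⟨n, rfl⟩ := hab.exists_nat_pow_eq
  clear hab
  induction n with
  | zero => exact S.refl a
  | succ n ih => exact S.trans ih (by rw [pow_succ', mul_apply]; exact h _)

variable [DecidableEq α]

theorem sameCycle_setoid_mul_swap_le (σ : Perm α) (p q : α) :
    SameCycle.setoid (σ * swap p q) ≤ (SameCycle.setoid σ).mergeClasses p q := by
  refine sameCycle_setoid_le fun a => ?_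
  rcases eq_or_ne a p with rfl | hap
  · refine .inr ⟨.inl (SameCycle.refl _ _), .inr ?_⟩
    show σ.SameCycle (σ (swap a q a)) q
    rw [swap_apply_left, sameCycle_apply_left]
  rcases eq_or_ne a q with rfl | haq
  · refine .inr ⟨.inr (SameCycle.refl _ _), .inl ?_⟩
    show σ.SameCycle (σ (swap p a a)) p
    rw [swap_apply_right, sameCycle_apply_left]
  · left
    show σ.SameCycle a (σ (swap p q a))
    rw [swap_apply_of_ne_of_ne hap haq, sameCycle_apply_right]

theorem orbitCount_le_orbitCount_mul_swap_add_one (σ : Perm α) (p q : α) :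
    σ.orbitCount ≤ (σ * swap p q).orbitCount + 1 :=
  (Setoid.card_quotient_le_card_mergeClasses_add_one _ p q).trans
    (Nat.add_le_add_right (Setoid.card_quotient_le_of_le (sameCycle_setoid_mul_swap_le σ p q)) 1)

/-- Multiplying by `swap p q` cuts the common cycle of `p` and `q` into the arc from `σ p` to `q`
and the arc from `σ q` to `p`. -/
theorem not_sameCycle_mul_swap {σ : Perm α} {p q : α} (hpq : p ≠ q) (h : σ.SameCycle p q) :
    ¬ (σ * swap p q).SameCycle p q := by
  set τ := σ * swap p q
  have hex : ∃ k, 0 < k ∧ (σ ^ k) p = q := by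
    obtain ⟨n, hn⟩ := h.exists_nat_pow_eq
    exact ⟨n, Nat.pos_of_ne_zero (by rintro rfl; exact hpq hn), hn⟩
  obtain ⟨hk, hkq⟩ := Nat.find_spec hex
  set k := Nat.find hex
  have hne_q : ∀ j, 0 < j → j < k → (σ ^ j) p ≠ q := fun j hj hjk hjq =>
    Nat.find_min hex hjk ⟨hj, hjq⟩
  have hne_p : ∀ j, 0 < j → j < k → (σ ^ j) p ≠ p := fun j hj hjk hjp =>
    hne_q (k - j) (by omega) (by omega) <| by
      rw [← hjp, ← mul_apply, ← pow_add, Nat.sub_add_cancel hjk.le, hkq]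
  -- on the arc from `σ p` to `q`, `τ` follows `σ`
  have arc : ∀ j, 0 < j → j ≤ k → (τ ^ j) q = (σ ^ j) p := by
    intro j hj hjk
    induction j with
    | zero => omega
    | succ j ih =>
      rcases Nat.eq_zero_or_pos j with rfl | hj'
      · simp [τ]
      · rw [pow_succ', mul_apply, ih hj' (by omega), pow_succ', mul_apply]
        simp only [mul_apply,
          swap_apply_of_ne_of_ne (hne_p j hj' (by omega)) (hne_q j hj' (by omega))]
  have hper : IsPeriodicPt τ k q := by
    rw [IsPeriodicPt, IsFixedPt, ← coe_pow, arc k hk le_rfl, hkq]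
  intro hτ
  obtain ⟨n, hn⟩ := hτ.symm.exists_nat_pow_eq
  rw [coe_pow, ← hper.iterate_mod_apply, ← coe_pow] at hn
  rcases Nat.eq_zero_or_pos (n % k) with h0 | hpos
  · rw [h0, pow_zero, one_apply] at hn
    exact hpq hn.symm
  · rw [arc _ hpos (Nat.mod_lt n hk).le] at hn
    exact hne_p _ hpos (Nat.mod_lt n hk) hn

theorem orbitCount_add_one_le_orbitCount_mul_swap {σ : Perm α} {p q : α} (hpq : p ≠ q)
    (h : σ.SameCycle p q) : σ.orbitCount + 1 ≤ (σ * swap p q).orbitCount := by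
  classical
  have hle : SameCycle.setoid (σ * swap p q) ≤ SameCycle.setoid σ :=
    Setoid.mergeClasses_eq_self (S := SameCycle.setoid σ) h ▸ sameCycle_setoid_mul_swap_le σ p q
  let F := Quotient.map' (s₁ := SameCycle.setoid (σ * swap p q)) (s₂ := SameCycle.setoid σ) id hle
  have hF : Surjective F := by
    rintro ⟨a⟩
    exact ⟨Quotient.mk _ a, rfl⟩
  have hF' : ¬ Injective F := fun hinj =>
    not_sameCycle_mul_swap hpq h (Quotient.exact (hinj (Quotient.sound h : F ⟦p⟧ = F ⟦q⟧)))
  have := Fintype.ofFinite α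
  simp only [orbitCount, Nat.card_eq_fintype_card]
  exact Fintype.card_lt_of_surjective_not_injective F hF hF'

end Swap

section FirstReturn

variable {β : Type*}

/-- `g` is the first-return map of `h` on the range of `ι`, for an `h` that never spends two
consecutive steps outside that range. -/
def IsFirstReturn (h : Perm α) (ι : β → α) (g : Perm β) : Prop :=
  ∀ b, h (ι b) = ι (g b) ∨ h (ι b) ∉ Set.range ι ∧ h (h (ι b)) = ι (g b)

theorem isFirstReturn_extendDomain {ι : β → α} (hι : Injective ι) (g : Perm β)
    [DecidablePred (· ∈ Set.range ι)] :
    IsFirstReturn (g.extendDomain (Equiv.ofInjective ι hι)) ι g :=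
  fun b => .inl (extendDomain_apply_image g (Equiv.ofInjective ι hι) b)

theorem exists_isFirstReturn [Finite β] {h : Perm α} {ι : β → α} (hι : Injective ι)
    (hgap : ∀ x ∉ Set.range ι, h x ∈ Set.range ι) : ∃ g : Perm β, IsFirstReturn h ι g := by
  classical
  let next : α → α := fun x => if x ∈ Set.range ι then x else h x
  have hnext : ∀ b, next (h (ι b)) ∈ Set.range ι := fun b => by
    by_cases hb : h (ι b) ∈ Set.range ι
    · simpa only [next, if_pos hb] using hb
    · simpa only [next, if_neg hb] using hgap _ hb
  let f : β → β := fun b => (Equiv.ofInjective ι hι).symm ⟨_, hnext b⟩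
  have hf : ∀ b, ι (f b) = next (h (ι b)) := fun b => Equiv.apply_ofInjective_symm hι _
  have hfinj : Injective f := by
    intro a b hab
    have hab' : next (h (ι a)) = next (h (ι b)) := by rw [← hf, ← hf, hab]
    by_cases ha : h (ι a) ∈ Set.range ι <;> by_cases hb : h (ι b) ∈ Set.range ι <;>
      simp only [next, ha, hb, if_true, if_false] at hab'
    · exact hι (h.injective hab')
    · exact (hb (h.injective hab' ▸ ⟨a, rfl⟩)).elim
    · exact (ha (h.injective hab' ▸ ⟨b, rfl⟩)).elim
    · exact hι (h.injective (h.injective hab'))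
  refine ⟨Equiv.ofBijective f (Finite.injective_iff_bijective.1 hfinj), fun b => ?_⟩
  simp only [Equiv.ofBijective_apply, hf, next]
  by_cases hb : h (ι b) ∈ Set.range ι
  · exact .inl (if_pos hb).symm
  · exact .inr ⟨hb, (if_neg hb).symm⟩

namespace IsFirstReturn

variable {h : Perm α} {ι : β → α} {g : Perm β}

theorem sameCycle_apply (hg : IsFirstReturn h ι g) (b : β) : h.SameCycle (ι b) (ι (g b)) := by
  rcases hg b with hb | ⟨-, hb⟩
  · exact hb ▸ sameCycle_apply_right.2 (SameCycle.refl _ _)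
  · exact hb ▸ sameCycle_apply_right.2 (sameCycle_apply_right.2 (SameCycle.refl _ _))

theorem sameCycle_of_pow_apply_eq (hg : IsFirstReturn h ι g) (hι : Injective ι) (n : ℕ) :
    ∀ {a b : β}, (h ^ n) (ι a) = ι b → g.SameCycle a b := by
  induction n using Nat.strong_induction_on with
  | _ n ih =>
  intro a b hab
  rcases Nat.eq_zero_or_pos n with rfl | hn
  · exact hι hab ▸ SameCycle.refl _ _
  refine sameCycle_apply_left.1 ?_
  rcases hg a with ha | ⟨ha, ha'⟩
  · refine ih (n - 1) (by omega) ?_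
    rw [← ha, ← mul_apply, ← pow_succ, Nat.sub_add_cancel hn, hab]
  · obtain ⟨n, rfl⟩ : ∃ m, n = m + 2 := by
      refine ⟨n - 2, (Nat.sub_add_cancel ?_).symm⟩
      by_contra hn2
      obtain rfl : n = 1 := by omega
      exact ha ⟨b, by rw [← hab, pow_one]⟩
    refine ih n (by omega) ?_
    rw [← ha', ← mul_apply, ← mul_apply, ← pow_succ, ← pow_succ, hab]

/-- Inserting a fixed point `p` of `h` right after `ι a` keeps the first-return map. -/
theorem mul_swap [DecidableEq α] (hg : IsFirstReturn h ι g) (hι : Injective ι) {a : β} {p : α}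
    (hp : p ∉ Set.range ι) (hhp : h p = p) (ha : h (ι a) = ι (g a)) :
    IsFirstReturn (h * swap (ι a) p) ι g := by
  intro b
  have hbp : ι b ≠ p := fun hb => hp ⟨b, hb⟩
  by_cases hba : b = a
  · subst hba
    simp only [mul_apply, swap_apply_left, hhp, swap_apply_right]
    exact .inr ⟨hp, ha⟩
  rw [mul_apply, swap_apply_of_ne_of_ne (hι.ne hba) hbp]
  rcases hg b with hb | ⟨hb, hb'⟩
  · exact .inl hb
  · have hxp : h (ι b) ≠ p := fun hx => hbp (h.injective (hx.trans hhp.symm))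
    refine .inr ⟨hb, ?_⟩
    rw [mul_apply, swap_apply_of_ne_of_ne (fun hx => hb ⟨a, hx.symm⟩) hxp, hb']

theorem mul_right (hg : IsFirstReturn h ι g) {r' : Perm α} {r : Perm β}
    (hr : ∀ b, r' (ι b) = ι (r b)) (hr' : ∀ x ∉ Set.range ι, r' x = x) :
    IsFirstReturn (h * r') ι (g * r) := by
  intro b
  simp only [mul_apply, hr]
  rcases hg (r b) with hb | ⟨hb, hb'⟩
  · exact .inl hb
  · exact .inr ⟨hb, by rw [hr' _ hb, hb']⟩

variable [Finite α] [Finite β]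

theorem sameCycle_iff (hg : IsFirstReturn h ι g) (hι : Injective ι) {a b : β} :
    g.SameCycle a b ↔ h.SameCycle (ι a) (ι b) := by
  refine ⟨fun hab => sameCycle_setoid_le (S := (SameCycle.setoid h).comap ι)
    hg.sameCycle_apply hab, fun hab => ?_⟩
  obtain ⟨n, hn⟩ := hab.exists_nat_pow_eq
  exact hg.sameCycle_of_pow_apply_eq hι n hn

theorem orbitCount_eq (hg : IsFirstReturn h ι g) (hι : Injective ι)
    (hgap : ∀ x ∉ Set.range ι, h x ∈ Set.range ι) : g.orbitCount = h.orbitCount := by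
  have hS : SameCycle.setoid g = (SameCycle.setoid h).comap ι :=
    Setoid.ext fun _ _ => hg.sameCycle_iff hι
  rw [orbitCount, orbitCount, hS]
  refine Setoid.card_quotient_comap_eq fun x => ?_
  by_cases hx : x ∈ Set.range ι
  · obtain ⟨b, rfl⟩ := hx
    exact ⟨b, SameCycle.refl _ _⟩
  · obtain ⟨b, hb⟩ := hgap x hx
    exact ⟨b, hb ▸ sameCycle_apply_right.2 (SameCycle.refl _ _)⟩

end IsFirstReturn

end FirstReturn

end Equiv.Perm

namespace SimpleGraph

variable {V : Type*} {G H : SimpleGraph V}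

instance [Finite V] : Finite G.Dart := Finite.of_injective _ Dart.toProd_injective

theorem reachable_iff_of_le (hle : H ≤ G) (hadj : ∀ a b, G.Adj a b → H.Reachable a b)
    {x y : V} : H.Reachable x y ↔ G.Reachable x y := by
  refine ⟨Reachable.mono hle, ?_⟩
  rintro ⟨p⟩
  induction p with
  | nil => rfl
  | cons h _ ih => exact (hadj _ _ h).trans ih

theorem Hom.mapDart_ofLE_injective (hle : H ≤ G) : Injective (Hom.ofLE hle).mapDart :=
  fun _ _ h => Dart.ext _ _ (congrArg (fun d : G.Dart => d.toProd) h)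

theorem notMem_range_mapDart_ofLE_deleteEdges_iff {e : Sym2 V} {x : G.Dart} :
    x ∉ Set.range (Hom.ofLE (G.deleteEdges_le {e})).mapDart ↔ x.edge = e := by
  refine not_iff_comm.1 ⟨fun hx => ⟨⟨x.toProd, deleteEdges_adj.2 ⟨x.adj, hx⟩⟩, rfl⟩, ?_⟩
  rintro ⟨y, rfl⟩
  exact (deleteEdges_adj.1 y.adj).2

theorem card_edgeSet_deleteEdges_edge [Finite V] (d : G.Dart) :
    Nat.card (G.deleteEdges {d.edge}).edgeSet + 1 = Nat.card G.edgeSet := by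
  rw [edgeSet_deleteEdges, Nat.card_coe_set_eq, Nat.card_coe_set_eq]
  exact Set.ncard_sdiff_singleton_add_one d.edge_mem (Set.toFinite _)

theorem adj_deleteEdges_edge {d : G.Dart} {a b : V} (h : G.Adj a b) (ha₁ : a ≠ d.fst)
    (ha₂ : a ≠ d.snd) : (G.deleteEdges {d.edge}).Adj a b := by
  refine deleteEdges_adj.2 ⟨h, fun he => ?_⟩
  rcases Sym2.eq_iff.1 (Set.mem_singleton_iff.1 he) with ⟨rfl, -⟩ | ⟨rfl, -⟩
  exacts [ha₁ rfl, ha₂ rfl]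

section Triangle

variable {d : G.Dart} {u : V} (hu₁ : G.Adj d.fst u) (hu₂ : G.Adj d.snd u)
include hu₁ hu₂

theorem exists_dart_deleteEdges_fst_eq (x : G.Dart) :
    ∃ e : (G.deleteEdges {d.edge}).Dart, e.fst = x.fst := by
  by_cases hx : x ∈ Set.range (Hom.ofLE (G.deleteEdges_le {d.edge})).mapDart
  · obtain ⟨e, rfl⟩ := hx
    exact ⟨e, rfl⟩
  rcases (dart_edge_eq_iff _ _).1 (notMem_range_mapDart_ofLE_deleteEdges_iff.1 hx) with rfl | rfl
  · exact ⟨⟨(_, u), (adj_deleteEdges_edge hu₁.symm hu₁.ne.symm hu₂.ne.symm).symm⟩, rfl⟩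
  · exact ⟨⟨(_, u), (adj_deleteEdges_edge hu₂.symm hu₁.ne.symm hu₂.ne.symm).symm⟩, rfl⟩

theorem reachable_deleteEdges_of_adj {a b : V} (h : G.Adj a b) :
    (G.deleteEdges {d.edge}).Reachable a b := by
  by_cases he : s(a, b) = d.edge
  · have hd : (G.deleteEdges {d.edge}).Reachable d.fst d.snd :=
      (adj_deleteEdges_edge hu₁.symm hu₁.ne.symm hu₂.ne.symm).symm.reachable.trans
        (adj_deleteEdges_edge hu₂.symm hu₁.ne.symm hu₂.ne.symm).reachable
    rcases Sym2.eq_iff.1 he with ⟨rfl, rfl⟩ | ⟨rfl, rfl⟩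
    exacts [hd, hd.symm]
  · exact (deleteEdges_adj.2 ⟨h, he⟩).reachable

end Triangle

theorem eq_of_degree_eq_three [Fintype V] [DecidableRel G.Adj] {u v w a b : V}
    (hdeg : G.degree u = 3) (hv : G.Adj u v) (hw : G.Adj u w) (hvw : v ≠ w) (ha : G.Adj u a)
    (hb : G.Adj u b) (hav : a ≠ v) (haw : a ≠ w) (hbv : b ≠ v) (hbw : b ≠ w) : a = b := by
  classical
  by_contra hab
  have hsub : ({v, w, a, b} : Finset V) ⊆ G.neighborFinset u := by
    intro x hx
    simp only [Finset.mem_insert, Finset.mem_singleton] at hx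
    rcases hx with rfl | rfl | rfl | rfl <;> simpa
  have := Finset.card_le_card hsub
  rw [card_neighborFinset_eq_degree, hdeg, Finset.card_insert_of_notMem (by simp [*, Ne.symm]),
    Finset.card_insert_of_notMem (by simp [*, Ne.symm]), Finset.card_pair hab] at this
  omega

end SimpleGraph

namespace AltPaper.RotSys

variable {V : Type*} {G H : SimpleGraph V}

theorem facePerm_apply (R : RotSys G) (d : G.Dart) : R.facePerm d = R.rot d.symm :=
  rfl

theorem rot_ne_self (R : RotSys G) {d d' : G.Dart} (hfst : d.fst = d'.fst) (hne : d ≠ d') :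
    R.rot d ≠ d := fun hfix => by
  obtain ⟨n, hn⟩ := R.orbit_full d d' hfst
  exact hne (hn ▸ (Equiv.Perm.pow_apply_eq_self_of_apply_eq_self hfix n).symm)

/-- At a vertex with at most three darts, any two darts are consecutive in the rotation. -/
theorem rot_eq_or_rot_eq (R : RotSys G) {d₁ d₂ : G.Dart} (hne : d₁ ≠ d₂)
    (hfst : d₁.fst = d₂.fst)
    (hthree : ∀ d d' : G.Dart, d.fst = d₁.fst → d'.fst = d₁.fst → d ≠ d₁ → d ≠ d₂ →
      d' ≠ d₁ → d' ≠ d₂ → d = d') :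
    R.rot d₁ = d₂ ∨ R.rot d₂ = d₁ := by
  by_contra! h
  have h₁ := R.rot_ne_self hfst hne
  have h₂ := R.rot_ne_self hfst.symm hne.symm
  exact hne (R.rot.injective (hthree _ _ (R.fst_rot d₁) ((R.fst_rot d₂).trans hfst.symm)
    h₁ h.1 h.2 h₂))

theorem orbitRel_closure_eq (R : RotSys G) :
    MulAction.orbitRel (Subgroup.closure {R.rot, dartRev G}) G.Dart =
      G.reachableSetoid.comap fun d : G.Dart => d.fst := by
  set K := Subgroup.closure ({R.rot, dartRev G} : Set (Equiv.Perm G.Dart))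
  set O := MulAction.orbitRel K G.Dart
  have hrot : R.rot ∈ K := Subgroup.subset_closure (Set.mem_insert _ _)
  have hrev : dartRev G ∈ K := Subgroup.subset_closure (Set.mem_insert_of_mem _ rfl)
  have step : ∀ g ∈ K, ∀ d, O (g d) d := fun g hg d => MulAction.mem_orbit d (⟨g, hg⟩ : K)
  have same_fst : ∀ a b : G.Dart, a.fst = b.fst → O a b := fun a b h => by
    obtain ⟨n, rfl⟩ := R.orbit_full a b h
    exact O.symm (step _ (pow_mem hrot n) a)
  have reachable : ∀ g ∈ K, ∀ d, G.Reachable (g d).fst d.fst := by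
    intro g hg
    induction hg using Subgroup.closure_induction with
    | mem x hx =>
      rcases hx with rfl | rfl
      · exact fun d => by rw [R.fst_rot]
      · exact fun d => d.adj.symm.reachable
    | one => exact fun d => Reachable.refl _
    | mul x y _ _ hx hy => exact fun d => (hx (y d)).trans (hy d)
    | inv x _ hx => exact fun d => by simpa using (hx (x⁻¹ d)).symm
  have walk : ∀ {x y : V} (p : G.Walk x y) (a b : G.Dart), a.fst = x → b.fst = y → O a b := by
    intro x y p
    induction p with
    | nil => exact fun a b ha hb => same_fst a b (ha.trans hb.symm)
    | cons h p ih =>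
      intro a b ha hb
      let e : G.Dart := ⟨(_, _), h⟩
      exact O.trans (same_fst a e ha) (O.trans (O.symm (step _ hrev e)) (ih e.symm b rfl hb))
  ext a b
  refine ⟨fun hab => ?_, fun ⟨p⟩ => walk p a b rfl rfl⟩
  obtain ⟨⟨g, hg⟩, rfl⟩ := MulAction.mem_orbit_iff.1 (MulAction.orbitRel_apply.1 hab)
  exact reachable g hg b

theorem numComps_eq (R : RotSys G) :
    R.numComps = Nat.card (Quotient (G.reachableSetoid.comap fun d : G.Dart => d.fst)) := by
  rw [numComps, ← R.orbitRel_closure_eq]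

theorem numComps_eq_of_le (hle : H ≤ G) (hfst : ∀ x : G.Dart, ∃ d : H.Dart, d.fst = x.fst)
    (hadj : ∀ a b, G.Adj a b → H.Reachable a b) (R : RotSys G) (R' : RotSys H) :
    R'.numComps = R.numComps := by
  have hS : H.reachableSetoid.comap (fun d : H.Dart => d.fst) =
      (G.reachableSetoid.comap fun d : G.Dart => d.fst).comap (Hom.ofLE hle).mapDart :=
    Setoid.ext fun _ _ => reachable_iff_of_le hle hadj
  rw [numComps_eq, numComps_eq, hS]
  refine Setoid.card_quotient_comap_eq fun x => ?_
  obtain ⟨d, hd⟩ := hfst x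
  refine ⟨d, ?_⟩
  show G.Reachable x.fst d.fst
  rw [hd]

theorem fst_extendDomain_rot (R' : RotSys H) (hle : H ≤ G)
    [DecidablePred (· ∈ Set.range (Hom.ofLE hle).mapDart)] (x : G.Dart) :
    (R'.rot.extendDomain (Equiv.ofInjective _ (Hom.mapDart_ofLE_injective hle)) x).fst =
      x.fst := by
  by_cases hx : x ∈ Set.range (Hom.ofLE hle).mapDart
  · obtain ⟨b, rfl⟩ := hx
    exact (congrArg (fun x : G.Dart => x.fst) (Equiv.Perm.extendDomain_apply_image R'.rot
      (Equiv.ofInjective _ (Hom.mapDart_ofLE_injective hle)) b)).trans (R'.fst_rot b)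
  · rw [Equiv.Perm.extendDomain_apply_not_subtype _ _ hx]

variable [Finite V]

theorem sameCycle_rot_iff (R : RotSys G) {d d' : G.Dart} :
    R.rot.SameCycle d d' ↔ d.fst = d'.fst := by
  refine ⟨fun h => Equiv.Perm.sameCycle_setoid_le (S := Setoid.ker fun d : G.Dart => d.fst)
    (fun d => (R.fst_rot d).symm) h, fun h => ?_⟩
  obtain ⟨n, rfl⟩ := R.orbit_full d d' h
  exact Equiv.Perm.sameCycle_pow_right.2 (Equiv.Perm.SameCycle.refl _ _)

theorem numVerts_eq (R : RotSys G) :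
    R.numVerts = Nat.card (Quotient (Setoid.ker fun d : G.Dart => d.fst)) := by
  have hS : Equiv.Perm.SameCycle.setoid R.rot = Setoid.ker fun d : G.Dart => d.fst :=
    Setoid.ext fun _ _ => R.sameCycle_rot_iff
  rw [numVerts, Equiv.Perm.card_orbitRel_zpowers, Equiv.Perm.orbitCount, hS]

theorem numVerts_eq_of_le (hle : H ≤ G) (hfst : ∀ x : G.Dart, ∃ d : H.Dart, d.fst = x.fst)
    (R : RotSys G) (R' : RotSys H) : R'.numVerts = R.numVerts := by
  have hS : (Setoid.ker fun d : H.Dart => d.fst) =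
      (Setoid.ker fun d : G.Dart => d.fst).comap (Hom.ofLE hle).mapDart :=
    rfl
  rw [numVerts_eq, numVerts_eq, hS]
  refine Setoid.card_quotient_comap_eq fun x => ?_
  obtain ⟨d, hd⟩ := hfst x
  exact ⟨d, hd.symm⟩

def restrict (R : RotSys G) (hle : H ≤ G) (g : Equiv.Perm H.Dart)
    (hg : R.rot.IsFirstReturn (Hom.ofLE hle).mapDart g) : RotSys H where
  rot := g
  fst_rot b := by
    rcases hg b with hb | ⟨-, hb⟩
    · exact (congrArg (fun x : G.Dart => x.fst) hb).symm.trans (R.fst_rot _)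
    · exact (congrArg (fun x : G.Dart => x.fst) hb).symm.trans
        ((R.fst_rot _).trans (R.fst_rot _))
  orbit_full b b' h :=
    ((hg.sameCycle_iff (Hom.mapDart_ofLE_injective hle)).2
      (R.sameCycle_rot_iff.2 h)).exists_nat_pow_eq

def extend (R' : RotSys H) (hle : H ≤ G) (ρ : Equiv.Perm G.Dart) (hρ : ∀ x, (ρ x).fst = x.fst)
    (hg : ρ.IsFirstReturn (Hom.ofLE hle).mapDart R'.rot)
    (hgap : ∀ x ∉ Set.range (Hom.ofLE hle).mapDart, ρ x ∈ Set.range (Hom.ofLE hle).mapDart) :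
    RotSys G where
  rot := ρ
  fst_rot := hρ
  orbit_full x y hxy := by
    have near : ∀ x, ∃ b : H.Dart, ρ.SameCycle x ((Hom.ofLE hle).mapDart b) ∧ b.fst = x.fst := by
      intro x
      by_cases hx : x ∈ Set.range (Hom.ofLE hle).mapDart
      · obtain ⟨b, rfl⟩ := hx
        exact ⟨b, Equiv.Perm.SameCycle.refl _ _, rfl⟩
      · obtain ⟨b, hb⟩ := hgap x hx
        exact ⟨b, hb ▸ Equiv.Perm.sameCycle_apply_right.2 (.refl _ _),
          (congrArg (fun x : G.Dart => x.fst) hb).trans (hρ x)⟩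
    obtain ⟨a, hxa, ha⟩ := near x
    obtain ⟨b, hyb, hb⟩ := near y
    have hab := (hg.sameCycle_iff (Hom.mapDart_ofLE_injective hle)).1
      (R'.sameCycle_rot_iff.2 (ha.trans (hxy.trans hb.symm)))
    exact (hxa.trans (hab.trans hyb.symm)).exists_nat_pow_eq

end AltPaper.RotSys

namespace AltPaper

open Equiv.Perm

variable {V : Type*} {G : SimpleGraph V} {d : G.Dart} {u : V}

local notation "ι" => Hom.mapDart (Hom.ofLE (G.deleteEdges_le (Singleton.singleton d.edge)))

theorem mapDart_ne_of_deleteEdges (b : (G.deleteEdges {d.edge}).Dart) : ι b ≠ d ∧ ι b ≠ d.symm :=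
  ⟨fun h => notMem_range_mapDart_ofLE_deleteEdges_iff.2 rfl ⟨b, h⟩,
    fun h => notMem_range_mapDart_ofLE_deleteEdges_iff.2 d.edge_symm ⟨b, h⟩⟩

theorem RotSys.exists_insertEdge [Finite V] (R' : RotSys (G.deleteEdges {d.edge}))
    {a₁ a₂ : (G.deleteEdges {d.edge}).Dart} (ha₁ : a₁.fst = d.fst) (ha₂ : a₂.fst = d.snd) :
    ∃ R : RotSys G, R.rot.IsFirstReturn ι R'.rot ∧ R.rot d = ι a₁ ∧ R.rot (ι a₂) = d.symm ∧
      ∀ b, b ≠ R'.rot.symm a₁ → b ≠ a₂ → R.rot (ι b) = ι (R'.rot b) := by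
  classical
  set x₀ := R'.rot.symm a₁
  have hx₀ : R'.rot x₀ = a₁ := R'.rot.apply_symm_apply a₁
  have hinj := Hom.mapDart_ofLE_injective (G.deleteEdges_le {d.edge})
  have hd : d ∉ Set.range ι := notMem_range_mapDart_ofLE_deleteEdges_iff.2 rfl
  have hd' : d.symm ∉ Set.range ι := notMem_range_mapDart_ofLE_deleteEdges_iff.2 d.edge_symm
  have hx₀fst : x₀.fst = d.fst := by rw [← ha₁, ← hx₀, R'.fst_rot]
  have ha₂x₀ : a₂ ≠ x₀ := fun h => d.fst_ne_snd (by rw [← hx₀fst, ← ha₂, h])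
  set ρ₀ := R'.rot.extendDomain (Equiv.ofInjective ι hinj)
  have hρ₀ : ∀ b, ρ₀ (ι b) = ι (R'.rot b) := extendDomain_apply_image _ _
  have hρ₀' : ∀ x ∉ Set.range ι, ρ₀ x = x := fun x hx => extendDomain_apply_not_subtype _ _ hx
  set ρ₁ := ρ₀ * swap (ι x₀) d
  have hρ₁ : ∀ b ≠ x₀, ρ₁ (ι b) = ι (R'.rot b) := fun b hb => by
    rw [mul_apply, swap_apply_of_ne_of_ne (hinj.ne hb) (mapDart_ne_of_deleteEdges b).1, hρ₀]
  have hρ₁d' : ρ₁ d.symm = d.symm := by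
    rw [mul_apply, swap_apply_of_ne_of_ne (mapDart_ne_of_deleteEdges x₀).2.symm d.symm_ne,
      hρ₀' _ hd']
  let ρ := ρ₁ * swap (ι a₂) d.symm
  have hg : ρ.IsFirstReturn ι R'.rot :=
    ((isFirstReturn_extendDomain hinj _).mul_swap hinj hd (hρ₀' d hd) (hρ₀ x₀)).mul_swap hinj hd'
      hρ₁d' (hρ₁ a₂ ha₂x₀)
  have hρd : ρ d = ι a₁ := by
    rw [mul_apply, swap_apply_of_ne_of_ne (mapDart_ne_of_deleteEdges a₂).1.symm
      d.symm_ne.symm, mul_apply, swap_apply_right, hρ₀, hx₀]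
  have hρd' : ρ d.symm = ι (R'.rot a₂) := by
    rw [mul_apply, swap_apply_right, hρ₁ a₂ ha₂x₀]
  have hfst : ∀ x, (ρ x).fst = x.fst := fun x => by
    simp only [ρ, ρ₁, mul_apply]
    rw [R'.fst_extendDomain_rot, apply_swap_eq_self (v := fun x : G.Dart => x.fst) hx₀fst,
      apply_swap_eq_self (v := fun x : G.Dart => x.fst) ha₂]
  have hgap : ∀ x ∉ Set.range ι, ρ x ∈ Set.range ι := fun x hx => by
    rcases (dart_edge_eq_iff _ _).1 (notMem_range_mapDart_ofLE_deleteEdges_iff.1 hx) with rfl | rfl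
    exacts [⟨a₁, hρd.symm⟩, ⟨_, hρd'.symm⟩]
  refine ⟨R'.extend _ ρ hfst hg hgap, hg, hρd, by simp [RotSys.extend, ρ, hρ₁d'],
    fun b hb₁ hb₂ => ?_⟩
  show ρ (ι b) = _
  rw [mul_apply, swap_apply_of_ne_of_ne (hinj.ne hb₂) (mapDart_ne_of_deleteEdges b).2,
    hρ₁ b hb₁]

section Triangle

variable (hu₁ : G.Adj d.fst u) (hu₂ : G.Adj d.snd u)
include hu₁ hu₂

theorem RotSys.rot_mem_range_mapDart_deleteEdges (R : RotSys G) (x : G.Dart)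
    (hx : x ∉ Set.range ι) : R.rot x ∈ Set.range ι := by
  have hxd := notMem_range_mapDart_ofLE_deleteEdges_iff.1 hx
  obtain ⟨y, hyx, hyu, hux⟩ : ∃ y : G.Dart, y.fst = x.fst ∧ y.snd = u ∧ u ≠ x.snd := by
    rcases (dart_edge_eq_iff _ _).1 hxd with rfl | rfl
    exacts [⟨⟨(_, u), hu₁⟩, rfl, rfl, hu₂.ne.symm⟩, ⟨⟨(_, u), hu₂⟩, rfl, rfl, hu₁.ne.symm⟩]
  by_contra hr
  rcases (dart_edge_eq_iff _ _).1 ((notMem_range_mapDart_ofLE_deleteEdges_iff.1 hr).trans hxd.symm)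
    with h | h
  · exact R.rot_ne_self hyx.symm
      (fun hxy => hux (hyu ▸ congrArg (fun z : G.Dart => z.snd) hxy.symm)) h
  · exact x.fst_ne_snd ((R.fst_rot x).symm.trans (congrArg (fun z : G.Dart => z.fst) h))

variable [Finite V]

/-- Vertices and components are unchanged and one edge is lost, so only the faces matter. -/
theorem RotSys.genusLE_deleteEdges_iff (R : RotSys G) (R' : RotSys (G.deleteEdges {d.edge}))
    (k : ℕ) : R'.genusLE k ↔
      2 * R.numComps + Nat.card G.edgeSet ≤ 2 * k + (R'.numFaces + 1) + R.numVerts := by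
  have hfst := exists_dart_deleteEdges_fst_eq hu₁ hu₂
  have hV := RotSys.numVerts_eq_of_le (deleteEdges_le _) hfst R R'
  have hC := RotSys.numComps_eq_of_le (deleteEdges_le _) hfst
    (fun _ _ => reachable_deleteEdges_of_adj hu₁ hu₂) R R'
  have hE := card_edgeSet_deleteEdges_edge d
  unfold RotSys.genusLE
  omega

section DecidableEq

variable [DecidableEq V]

theorem RotSys.numFaces_deleteEdges (R : RotSys G) (R' : RotSys (G.deleteEdges {d.edge}))
    (hR : R.rot.IsFirstReturn ι R'.rot) :
    R'.numFaces = (R.facePerm * swap d d.symm).orbitCount := by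
  have hfix : ∀ x ∉ Set.range ι, (dartRev G * swap d d.symm) x = x := by
    intro x hx
    rcases (dart_edge_eq_iff _ _).1 (notMem_range_mapDart_ofLE_deleteEdges_iff.1 hx)
      with rfl | rfl <;> simp [dartRev]
  have hface : (R.facePerm * swap d d.symm).IsFirstReturn ι R'.facePerm := by
    refine hR.mul_right (r := dartRev _) (fun b => ?_) hfix
    rw [mul_apply, swap_apply_of_ne_of_ne (mapDart_ne_of_deleteEdges b).1
      (mapDart_ne_of_deleteEdges b).2]
    rfl
  rw [RotSys.numFaces, card_orbitRel_zpowers]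
  refine hface.orbitCount_eq (Hom.mapDart_ofLE_injective _) fun x hx => ?_
  rw [show (R.facePerm * swap d d.symm) x = R.rot x from congrArg R.rot (hfix x hx)]
  exact R.rot_mem_range_mapDart_deleteEdges hu₁ hu₂ x hx

theorem RotSys.genusLE_of_isFirstReturn (R : RotSys G) (R' : RotSys (G.deleteEdges {d.edge}))
    (hR : R.rot.IsFirstReturn ι R'.rot) {k : ℕ} (h : R.genusLE k) : R'.genusLE k := by
  have hF : R.numFaces ≤ R'.numFaces + 1 := by
    rw [R.numFaces_deleteEdges hu₁ hu₂ R' hR, RotSys.numFaces, card_orbitRel_zpowers]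
    exact orbitCount_le_orbitCount_mul_swap_add_one _ _ _
  rw [R.genusLE_deleteEdges_iff hu₁ hu₂ R']
  unfold RotSys.genusLE at h
  omega

theorem RotSys.genusLE_of_isFirstReturn_of_sameCycle (R : RotSys G)
    (R' : RotSys (G.deleteEdges {d.edge})) (hR : R.rot.IsFirstReturn ι R'.rot)
    (hsc : (R.facePerm * swap d d.symm).SameCycle d d.symm) {k : ℕ} (h : R'.genusLE k) :
    R.genusLE k := by
  have hF : R'.numFaces + 1 ≤ R.numFaces := by
    have := orbitCount_add_one_le_orbitCount_mul_swap d.symm_ne.symm hsc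
    rwa [mul_assoc, swap_mul_self, mul_one, ← R.numFaces_deleteEdges hu₁ hu₂ R' hR,
      ← card_orbitRel_zpowers] at this
  rw [R.genusLE_deleteEdges_iff hu₁ hu₂ R'] at h
  unfold RotSys.genusLE
  omega

end DecidableEq

theorem GenusLE.deleteEdges_edge {k : ℕ} (h : GenusLE G k) :
    GenusLE (G.deleteEdges {d.edge}) k := by
  classical
  obtain ⟨R, hR⟩ := h
  obtain ⟨g, hg⟩ := exists_isFirstReturn (Hom.mapDart_ofLE_injective _)
    (R.rot_mem_range_mapDart_deleteEdges hu₁ hu₂)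
  exact ⟨R.restrict _ g hg, R.genusLE_of_isFirstReturn hu₁ hu₂ _ hg hR⟩

/-- Stated for any `H` equal to `G - d.edge`, so that it applies to either orientation of `d`. -/
theorem GenusLE.of_deleteEdges_edge {H : SimpleGraph V} (hH : G.deleteEdges {d.edge} = H)
    (R' : RotSys H) {k : ℕ} (hR' : R'.genusLE k)
    (hrot : ∀ e : H.Dart, e.toProd = (u, d.fst) → (R'.rot e).toProd = (u, d.snd)) :
    GenusLE G k := by
  classical
  subst hH
  have hu₁' := adj_deleteEdges_edge hu₁.symm hu₁.ne.symm hu₂.ne.symm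
  have hu₂' := adj_deleteEdges_edge hu₂.symm hu₁.ne.symm hu₂.ne.symm
  let a₁ : (G.deleteEdges {d.edge}).Dart := ⟨(d.fst, u), hu₁'.symm⟩
  let a₂ : (G.deleteEdges {d.edge}).Dart := ⟨(d.snd, u), hu₂'.symm⟩
  obtain ⟨R, hR, hd, ha₂, hrest⟩ := R'.exists_insertEdge (a₁ := a₁) (a₂ := a₂) rfl rfl
  refine ⟨R, R.genusLE_of_isFirstReturn_of_sameCycle hu₁ hu₂ R' hR ?_ hR'⟩
  -- the new face runs `d, (d.fst, u), (u, d.snd), d.symm`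
  set φ := R.facePerm * swap d d.symm
  have hφ : ∀ b, φ (ι b) = R.rot (ι b.symm) := fun b => by
    rw [mul_apply, swap_apply_of_ne_of_ne (mapDart_ne_of_deleteEdges b).1
      (mapDart_ne_of_deleteEdges b).2, RotSys.facePerm_apply]
    rfl
  have h₁ : φ d = ι a₁ := by
    rw [mul_apply, swap_apply_left, RotSys.facePerm_apply, Dart.symm_symm, hd]
  have h₂ : φ (ι a₁) = ι ⟨(u, d.snd), hu₂'⟩ := by
    have hx : a₁.symm ≠ R'.rot.symm a₁ := fun h => hu₁.ne <| by
      have := R'.fst_rot (R'.rot.symm a₁)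
      rwa [R'.rot.apply_symm_apply, ← h] at this
    have he : R'.rot a₁.symm = ⟨(u, d.snd), hu₂'⟩ := Dart.ext _ _ (hrot a₁.symm rfl)
    rw [hφ, hrest _ hx (fun h => hu₂.ne.symm (congrArg (fun e => e.fst) h)), he]
  have h₃ : φ (ι ⟨(u, d.snd), hu₂'⟩) = d.symm := by
    rw [hφ]
    exact ha₂
  rw [← h₃, ← h₂, ← h₁, sameCycle_apply_right, sameCycle_apply_right, sameCycle_apply_right]

end Triangle

theorem GenusLE.of_deleteEdges_of_degree_eq_three [Fintype V] [DecidableRel G.Adj] {v w : V}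
    (huv : G.Adj u v) (hvw : G.Adj v w) (huw : G.Adj u w) (hdeg : G.degree u = 3) {k : ℕ}
    (h : GenusLE (G.deleteEdges {s(v, w)}) k) : GenusLE G k := by
  obtain ⟨R', hR'⟩ := h
  let d : G.Dart := ⟨(v, w), hvw⟩
  let e₁ : (G.deleteEdges {s(v, w)}).Dart :=
    ⟨(u, v), adj_deleteEdges_edge (d := d) huv huv.ne huw.ne⟩
  let e₂ : (G.deleteEdges {s(v, w)}).Dart :=
    ⟨(u, w), adj_deleteEdges_edge (d := d) huw huv.ne huw.ne⟩
  have hsnd : ∀ x : (G.deleteEdges {s(v, w)}).Dart, x.fst = u → x ≠ e₁ → x ≠ e₂ →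
      G.Adj u x.snd ∧ x.snd ≠ v ∧ x.snd ≠ w := fun x hx h₁ h₂ => by
    refine ⟨hx ▸ (deleteEdges_adj.1 x.adj).1, fun h => h₁ ?_, fun h => h₂ ?_⟩ <;>
      exact Dart.ext _ _ (Prod.ext hx h)
  have hthree : ∀ x y : (G.deleteEdges {s(v, w)}).Dart, x.fst = u → y.fst = u →
      x ≠ e₁ → x ≠ e₂ → y ≠ e₁ → y ≠ e₂ → x = y := by
    intro x y hx hy hx₁ hx₂ hy₁ hy₂
    obtain ⟨hxu, hxv, hxw⟩ := hsnd x hx hx₁ hx₂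
    obtain ⟨hyu, hyv, hyw⟩ := hsnd y hy hy₁ hy₂
    exact Dart.ext _ _ (Prod.ext (hx.trans hy.symm)
      (eq_of_degree_eq_three hdeg huv huw hvw.ne hxu hyu hxv hxw hyv hyw))
  rcases R'.rot_eq_or_rot_eq (d₁ := e₁) (d₂ := e₂) (fun h => hvw.ne (congrArg (·.snd) h)) rfl
    hthree with h | h
  · exact GenusLE.of_deleteEdges_edge (d := d) (H := G.deleteEdges {s(v, w)}) huv.symm huw.symm
      rfl R' hR' fun e he => by rw [Dart.ext e e₁ he, h]
  · exact GenusLE.of_deleteEdges_edge (d := d.symm) huw.symm huv.symm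
      (by rw [d.edge_symm]; rfl) R' hR' fun e he => by rw [Dart.ext e e₂ he, h]; rfl

end AltPaper

open AltPaper in
/-- If `u, v, w` is a triangle of `G` and `u` has degree 3, then every
embedding of `G - vw` in a surface extends to an embedding of `G` in the same surface;
in particular `G` and `G - vw` have the same genus. -/
theorem statement_0 {V : Type*} [Fintype V] (G : SimpleGraph V) [DecidableRel G.Adj]
    (u v w : V) (huv : G.Adj u v) (hvw : G.Adj v w) (huw : G.Adj u w)
    (hdeg : G.degree u = 3) :
    (∀ k : ℕ, GenusLE (G.deleteEdges {s(v, w)}) k → GenusLE G k) ∧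
    (∀ k : ℕ, GenusLE G k ↔ GenusLE (G.deleteEdges {s(v, w)}) k) := by
  have extend (k : ℕ) := GenusLE.of_deleteEdges_of_degree_eq_three (k := k) huv hvw huw hdeg
  have restrict (k : ℕ) : GenusLE G k → GenusLE (G.deleteEdges {s(v, w)}) k :=
    GenusLE.deleteEdges_edge (d := ⟨(v, w), hvw⟩) huv.symm huw.symm
  exact ⟨extend, fun k => ⟨restrict k, extend k⟩⟩
end

section
/- Let H be a graph whose vertices are labelled with subsets of {X,Y}, such that at most four vertices of H carry both labels X and Y. Let Q be a cyclic sequence of the labelled vertices of H (each labelled vertex appearing exactly once). If the labels of Q cannot be arranged, in the cyclic order given by Q (choosing an order of the two labels at doubly-labelled vertices), into a cyclic label sequence with at most 4 label transitions, then Q contains six distinct vertices v1,...,v6 appearing in this cyclic order (or its reverse) such that X is a label of v1,v3,v5 and Y is a label of v2,v4,v6. -/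
open SimpleGraph

/-! If the sequence avoids `XYXYXY`, every choice `σ` of one label per vertex changes value at
most four times around the cycle: five changes already give six vertices whose chosen labels
alternate `X, Y, X, Y, X, Y`. If some vertex carries a single label, fill in `σ` backwards from
it so that `σ` changes value right after every doubly labelled vertex `i`; listing the labels of
such an `i` as `σ i` followed by the other one moves that change inside the vertex, so the
arrangement has exactly as many transitions as `σ`. If every vertex is doubly labelled, there are
at most four of them and the orders `XY, YX, XY, YX` do. -/

namespace AltPaper

open Finset

variable {n : ℕ}

theorem listTrans_singleton (a : Bool) : listTrans [a] = 0 := rfl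

theorem listTrans_cons_cons (a b : Bool) (t : List Bool) :
    listTrans (a :: b :: t) = (if a = b then 0 else 1) + listTrans (b :: t) := by
  simp only [listTrans, List.tail_cons, List.zip_cons_cons, List.filter_cons]
  split_ifs <;> simp_all [Nat.add_comm]

theorem listTrans_append_cons (u v : List Bool) (a : Bool) :
    listTrans (u ++ a :: v) = listTrans (u ++ [a]) + listTrans (a :: v) := by
  induction u with
  | nil => simp [listTrans_singleton]
  | cons x u ih =>
    cases u with
    | nil => simp [listTrans_cons_cons, listTrans_singleton]
    | cons y u =>
      simp only [List.cons_append, listTrans_cons_cons] at ih ⊢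
      omega

theorem listTrans_flatten_append (d : ℕ → Bool) (f : ℕ → List Bool) (m : ℕ) :
    listTrans (((List.range m).map fun j => d j :: f j).flatten ++ [d m]) =
      ∑ j ∈ range m, listTrans (d j :: f j ++ [d (j + 1)]) := by
  induction m with
  | zero => rfl
  | succ m ih =>
    rw [List.range_succ, List.map_append, List.flatten_append, sum_range_succ, ← ih]
    simpa only [List.map_singleton, List.flatten_singleton, List.append_assoc,
      List.cons_append] using listTrans_append_cons _ _ _

theorem cycTrans_flatten_of_periodic (d : ℕ → Bool) (f : ℕ → List Bool) (m : ℕ)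
    (hd : d (m + 1) = d 0) :
    cycTrans ((List.range (m + 1)).map fun j => d j :: f j).flatten =
      ∑ j ∈ range (m + 1), listTrans (d j :: f j ++ [d (j + 1)]) := by
  rw [← listTrans_flatten_append, hd, List.range_succ_eq_map]
  rfl

theorem arranged_eq_flatten_range (L : ZMod (n + 1) → List Bool) :
    arranged n L = ((List.range (n + 1)).map fun j : ℕ => L j).flatten := by
  rw [arranged, List.ofFn_eq_map, ← List.map_coe_finRange_eq_range, List.map_map]
  rfl

theorem card_filter_range_add (P : ZMod (n + 1) → Prop) [DecidablePred P]
    (s : ZMod (n + 1)) : #{j ∈ range (n + 1) | P (s + (j : ℕ))} = #{i | P i} := by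
  refine card_nbij' (fun j => s + j) (fun i => (i - s).val) ?_ ?_ ?_ ?_
  · intro j hj
    simpa using (mem_filter.1 hj).2
  · intro i hi
    simpa [Nat.le_of_lt_succ (ZMod.val_lt (i - s))] using hi
  · intro j hj
    simpa using ZMod.val_cast_of_lt (mem_range.1 (mem_filter.1 hj).1)
  · intro i _
    simp

def cyclicTransitions (σ : ZMod (n + 1) → Bool) : ℕ := #{i | σ i ≠ σ (i + 1)}

theorem cyclicTransitions_eq_card_range (σ : ZMod (n + 1) → Bool) (s : ZMod (n + 1)) :
    cyclicTransitions σ =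
      #{j ∈ range (n + 1) | σ (s + (j : ℕ)) ≠ σ (s + ((j + 1 : ℕ) : ZMod (n + 1)))} := by
  rw [cyclicTransitions, ← card_filter_range_add _ s]
  simp only [Nat.cast_succ, add_assoc]

theorem exists_alternating_chain (w : ℕ → Bool) (d : ℕ) : ∀ p r : ℕ,
    r ≤ #{j ∈ Ico p (p + d) | w j ≠ w (j + 1)} →
    ∃ a : ℕ → ℕ, a 0 = p ∧ a r ≤ p + d ∧
      ∀ k < r, a k < a (k + 1) ∧ w (a (k + 1)) ≠ w (a k) := by
  induction d with
  | zero =>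
    intro p r hr
    obtain rfl : r = 0 := by simpa using hr
    exact ⟨fun _ => p, rfl, le_rfl, by simp⟩
  | succ d ih =>
    intro p r hr
    rw [show p + (d + 1) = p + 1 + d by omega] at hr ⊢
    rw [← insert_Ico_add_one_left_eq_Ico (by omega), filter_insert] at hr
    by_cases hp : w p ≠ w (p + 1)
    · rw [if_pos hp, card_insert_of_notMem (by simp)] at hr
      rcases r with _ | r
      · exact ⟨fun _ => p, rfl, (by omega : p ≤ p + 1 + d), by simp⟩
      obtain ⟨a, ha0, har, ha⟩ := ih (p + 1) r (by omega)
      refine ⟨fun | 0 => p | k + 1 => a k, rfl, har, ?_⟩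
      rintro (_ | k) hk
      · exact ⟨by simp [ha0], by simpa [ha0] using Ne.symm hp⟩
      · exact ha k (by omega)
    · rw [if_neg hp] at hr
      obtain ⟨a, ha0, har, ha⟩ := ih (p + 1) r hr
      refine ⟨fun | 0 => p | k + 1 => a (k + 1), rfl, ?_, ?_⟩
      · rcases r with _ | r
        · exact (by omega : p ≤ p + 1 + d)
        · exact har
      · rintro (_ | k) hk
        · have := ha 0 hk
          simp only [ha0, not_not] at this hp ⊢
          exact ⟨by omega, hp ▸ this.2⟩
        · exact ha (k + 1) (by omega)

theorem eq_decide_even_of_alternating (b : ℕ → Bool) (r : ℕ) (h0 : b 0 = true)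
    (halt : ∀ k < r, b (k + 1) ≠ b k) : ∀ k ≤ r, b k = decide (k % 2 = 0) := by
  intro k hk
  induction k with
  | zero => simpa using h0
  | succ k ih =>
    have := halt k hk
    rw [ih (by omega)] at this
    rcases Nat.mod_two_eq_zero_or_one k with h | h <;> simp_all [Nat.succ_mod_two_eq_zero_iff]

theorem hasXYXYXY_of_selection {lab : ZMod (n + 1) → Finset Bool}
    {σ : ZMod (n + 1) → Bool} (hσ : ∀ i, σ i ∈ lab i) (h5 : 5 ≤ cyclicTransitions σ) :
    HasXYXYXY n lab := by
  obtain ⟨s, hs⟩ : ∃ s, σ s = true := by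
    by_contra! hfalse
    simp [cyclicTransitions, hfalse] at h5
  rw [cyclicTransitions_eq_card_range σ s, range_eq_Ico] at h5
  obtain ⟨a, ha0, ha5, ha⟩ :=
    exists_alternating_chain (fun j => σ (s + j)) (n + 1) 0 5 (by simpa using h5)
  have hval := eq_decide_even_of_alternating (fun k => σ (s + a k)) 5 (by simpa [ha0] using hs)
    (fun k hk => (ha k hk).2)
  have ha5n : a 5 ≤ n := by
    refine Nat.le_of_lt_succ (lt_of_le_of_ne (by simpa using ha5) fun h => ?_)
    simpa [h, hs] using hval 5 le_rfl
  refine ⟨s, fun k => a k, true, Fin.strictMono_iff_lt_succ.2 fun k => (ha k k.isLt).1, ha5n,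
    fun k => ?_⟩
  simpa [← hval k (by omega)] using hσ (s + a k)

def flipArrangement {ι : Type*} (lab : ι → Finset Bool) (σ : ι → Bool) (i : ι) : List Bool :=
  σ i :: if lab i = {true, false} then [!σ i] else []

theorem finset_bool_eq_singleton_of_mem :
    ∀ (s : Finset Bool) (b : Bool), b ∈ s → s ≠ {true, false} → s = {b} := by
  decide

theorem isArrangement_flipArrangement {lab : ZMod (n + 1) → Finset Bool}
    {σ : ZMod (n + 1) → Bool} (hσ : ∀ i, σ i ∈ lab i) :
    IsArrangement n lab (flipArrangement lab σ) := by
  intro i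
  unfold flipArrangement
  split_ifs with h
  · rw [h]
    cases σ i <;> simp [Finset.pair_comm]
  · simp [finset_bool_eq_singleton_of_mem _ _ (hσ i) h]

theorem cycTrans_arranged_flipArrangement {lab : ZMod (n + 1) → Finset Bool}
    {σ : ZMod (n + 1) → Bool} (hflip : ∀ i, lab i = {true, false} → σ (i + 1) ≠ σ i) :
    cycTrans (arranged n (flipArrangement lab σ)) = cyclicTransitions σ := by
  rw [arranged_eq_flatten_range, cyclicTransitions_eq_card_range σ 0, card_filter]
  refine (cycTrans_flatten_of_periodic (fun j => σ j)
    (fun j => if lab j = {true, false} then [!σ j] else []) n (by simp)).trans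
    (sum_congr rfl fun j _ => ?_)
  simp only [zero_add, Nat.cast_succ]
  by_cases hd : lab (j : ZMod (n + 1)) = {true, false}
  · rw [if_pos hd, Bool.eq_not.2 (hflip _ hd)]
    cases σ j <;> rfl
  · rw [if_neg hd]
    by_cases h : σ j = σ (j + 1) <;> simp [listTrans_cons_cons, listTrans_singleton, h]

/-- `backwardFill D g s₀ k` is the value at `s₀ - k`. -/
def backwardFill (D : ZMod (n + 1) → Prop) [DecidablePred D] (g : ZMod (n + 1) → Bool)
    (s₀ : ZMod (n + 1)) : ℕ → Bool
  | 0 => g s₀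
  | k + 1 => if D (s₀ - (k + 1 : ℕ)) then !backwardFill D g s₀ k else g (s₀ - (k + 1 : ℕ))

theorem exists_eq_not_succ_on (D : ZMod (n + 1) → Prop) [DecidablePred D]
    (g : ZMod (n + 1) → Bool) {s₀ : ZMod (n + 1)} (hs₀ : ¬ D s₀) :
    ∃ σ : ZMod (n + 1) → Bool, ∀ i, σ i = if D i then !σ (i + 1) else g i := by
  refine ⟨fun i => backwardFill D g s₀ (s₀ - i).val, fun i => ?_⟩
  by_cases hi : i = s₀
  · subst hi
    simp [backwardFill, hs₀]
  obtain ⟨k, hk⟩ : ∃ k, (s₀ - i).val = k + 1 :=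
    Nat.exists_eq_succ_of_ne_zero (by simpa [ZMod.val_eq_zero, sub_eq_zero] using Ne.symm hi)
  have hcast : ((k + 1 : ℕ) : ZMod (n + 1)) = s₀ - i := by rw [← hk, ZMod.natCast_zmod_val]
  have hnext : (s₀ - (i + 1)).val = k := by
    have : s₀ - (i + 1) = (k : ZMod (n + 1)) := by
      push_cast at hcast
      linear_combination -hcast
    rw [this, ZMod.val_cast_of_lt (by have := ZMod.val_lt (s₀ - i); omega)]
  simp only [hk, hnext, backwardFill, hcast, sub_sub_cancel]

theorem decide_mem_of_ne_empty : ∀ s : Finset Bool, s ≠ ∅ → decide (true ∈ s) ∈ s := by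
  decide

theorem exists_selection_flipping {lab : ZMod (n + 1) → Finset Bool}
    (hlab : ∀ i, lab i ≠ ∅) {s₀ : ZMod (n + 1)} (hs₀ : lab s₀ ≠ {true, false}) :
    ∃ σ : ZMod (n + 1) → Bool,
      (∀ i, σ i ∈ lab i) ∧ ∀ i, lab i = {true, false} → σ (i + 1) ≠ σ i := by
  obtain ⟨σ, hσ⟩ := exists_eq_not_succ_on (fun i => lab i = {true, false})
    (fun i => decide (true ∈ lab i)) hs₀
  refine ⟨σ, fun i => ?_, fun i hi => ?_⟩
  · by_cases hi : lab i = {true, false}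
    · rw [hi]
      cases σ i <;> decide
    · rw [hσ i, if_neg hi]
      exact decide_mem_of_ne_empty _ (hlab i)
  · rw [hσ i, if_pos hi]
    cases σ (i + 1) <;> decide

theorem exists_arrangement_of_forall_eq_pair (hn : n ≤ 3)
    {lab : ZMod (n + 1) → Finset Bool} (hall : ∀ i, lab i = {true, false}) :
    ∃ L, IsArrangement n lab L ∧ cycTrans (arranged n L) ≤ 4 := by
  obtain rfl : lab = fun _ => {true, false} := funext hall
  refine ⟨fun i => if i.val % 2 = 0 then [true, false] else [false, true], ?_⟩
  unfold IsArrangement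
  interval_cases n <;> decide

end AltPaper

open AltPaper in
/-- If at most four vertices of the cyclic sequence carry both labels and the
labels cannot be arranged (in the given cyclic order) into a cyclic sequence with at most 4
transitions, then the sequence contains the pattern `XYXYXY`. -/
theorem statement_2 (n : ℕ) (lab : ZMod (n + 1) → Finset Bool)
    (hlab : ∀ i, lab i ≠ ∅)
    (hboth : (Finset.univ.filter fun i : ZMod (n + 1) =>
      lab i = ({true, false} : Finset Bool)).card ≤ 4)
    (h : ¬ ∃ L : ZMod (n + 1) → List Bool,
      IsArrangement n lab L ∧ cycTrans (arranged n L) ≤ 4) :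
    HasXYXYXY n lab := by
  by_contra hpat
  have htrans (σ : ZMod (n + 1) → Bool) (hσ : ∀ i, σ i ∈ lab i) : cyclicTransitions σ ≤ 4 :=
    Nat.le_of_lt_succ (not_le.1 fun h5 => hpat (hasXYXYXY_of_selection hσ h5))
  apply h
  by_cases hsingle : ∃ s₀, lab s₀ ≠ {true, false}
  · obtain ⟨s₀, hs₀⟩ := hsingle
    obtain ⟨σ, hσ, hflip⟩ := exists_selection_flipping hlab hs₀
    exact ⟨_, isArrangement_flipArrangement hσ,
      (cycTrans_arranged_flipArrangement hflip).trans_le (htrans σ hσ)⟩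
  · rw [not_exists_not] at hsingle
    refine exists_arrangement_of_forall_eq_pair (Nat.le_of_lt_succ ?_) hsingle
    simpa [Finset.filter_true_of_mem fun i _ => hsingle i, ZMod.card] using hboth
end
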